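/- Let (x_t)_{t=1}^τ be a sequence of random vectors in ℝ^d adapted to a filtration (F_t)_{t=0}^τ with ‖x_t‖∞ ≤ x_max almost surely for all t, and let S₀ ⊆ {1,…,d} with s₀ = |S₀|. Let Σ̂_τ = (1/τ)·Σ_{t=1}^τ x_t x_tᵀ and Σ̄_τ = (1/τ)·Σ_{t=1}^τ E[x_t x_tᵀ | F_{t−1}]. If φ²(Σ̄_τ, S₀) ≥ φ₀² almost surely for some φ₀ > 0, then with probability at least 1 − 2d²·exp(−τ·φ₀⁴/(2048·x_max⁴·s₀²)), one has φ²(Σ̂_τ, S₀) ≥ φ₀²/2. -/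

import Mathlib

set_option autoImplicit false

open MeasureTheory ProbabilityTheory Matrix Finset
open scoped Classical ENNReal

noncomputable section

namespace Paper

section Compat

variable {ι : Type*} [Fintype ι] [DecidableEq ι]

/-- The ℓ¹ norm of a vector. -/
def l1 (v : ι → ℝ) : ℝ := ∑ j, |v j|

/-- The restriction of a vector to an index set. -/
def restr (S : Finset ι) (v : ι → ℝ) : ι → ℝ := fun j => if j ∈ S then v j else 0

/-- The compatibility constant `φ²(M, S)`. -/
def compat (M : Matrix ι ι ℝ) (S : Finset ι) : ℝ :=
  sInf {c : ℝ | ∃ v : ι → ℝ, l1 (restr Sᶜ v) ≤ 3 * l1 (restr S v) ∧ restr S v ≠ 0 ∧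
    c = (S.card : ℝ) * (v ⬝ᵥ (M *ᵥ v)) / l1 (restr S v) ^ 2}

/-- The expected Gram matrix `E[x xᵀ]` of a random vector. -/
def gram {Ω : Type*} [MeasurableSpace Ω] (P : Measure Ω) (x : Ω → ι → ℝ) : Matrix ι ι ℝ :=
  Matrix.of fun i j => ∫ ω, x ω i * x ω j ∂P

/-- The conditional Gram matrix `E[x xᵀ | A]`. -/
def condGram {Ω : Type*} [MeasurableSpace Ω] (P : Measure Ω) (A : Set Ω) (x : Ω → ι → ℝ) :
    Matrix ι ι ℝ :=
  Matrix.of fun i j => (∫ ω in A, x ω i * x ω j ∂P) / (P A).toReal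

end Compat

section CompatAux
variable {ι : Type*} [Fintype ι] [DecidableEq ι]

lemma l1_nonneg (v : ι → ℝ) : 0 ≤ l1 v := Finset.sum_nonneg fun j _ => abs_nonneg _

lemma l1_pos_of_ne_zero {v : ι → ℝ} (hv : v ≠ 0) : 0 < l1 v := by
  rcases Function.ne_iff.1 hv with ⟨j, hj⟩
  have : 0 < |v j| := abs_pos.2 hj
  calc 0 < |v j| := this
    _ ≤ l1 v := Finset.single_le_sum (fun k _ => abs_nonneg (v k)) (Finset.mem_univ j)

lemma l1_split (S : Finset ι) (v : ι → ℝ) : l1 v = l1 (restr S v) + l1 (restr Sᶜ v) := by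
  unfold l1 restr
  rw [← Finset.sum_add_distrib]
  apply Finset.sum_congr rfl
  intro j _
  by_cases hj : j ∈ S <;> simp [hj]

lemma quad_diff_le {M M' : Matrix ι ι ℝ} {ε : ℝ} (hεnn : 0 ≤ ε)
    (h : ∀ i j, |M i j - M' i j| ≤ ε)
    (v : ι → ℝ) : |v ⬝ᵥ (M *ᵥ v) - v ⬝ᵥ (M' *ᵥ v)| ≤ ε * (l1 v)^2 := by
  have expand : ∀ N : Matrix ι ι ℝ, v ⬝ᵥ (N *ᵥ v) = ∑ i, ∑ j, v i * (N i j * v j) := by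
    intro N
    simp [dotProduct, Matrix.mulVec, Finset.mul_sum]
  rw [expand, expand, ← Finset.sum_sub_distrib]
  have : ∀ i ∈ Finset.univ, |∑ j, v i * (M i j * v j) - ∑ j, v i * (M' i j * v j)| ≤
      ∑ j, |v i| * (ε * |v j|) := by
    intro i _
    rw [← Finset.sum_sub_distrib]
    refine (Finset.abs_sum_le_sum_abs _ _).trans (Finset.sum_le_sum fun j _ => ?_)
    have : v i * (M i j * v j) - v i * (M' i j * v j) = v i * ((M i j - M' i j) * v j) := by ring
    rw [this, abs_mul, abs_mul]
    exact mul_le_mul_of_nonneg_left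
      (mul_le_mul_of_nonneg_right (h i j) (abs_nonneg _)) (abs_nonneg _)
  calc |∑ i, (∑ j, v i * (M i j * v j) - ∑ j, v i * (M' i j * v j))|
      ≤ ∑ i, |∑ j, v i * (M i j * v j) - ∑ j, v i * (M' i j * v j)| :=
        Finset.abs_sum_le_sum_abs _ _
    _ ≤ ∑ i, ∑ j, |v i| * (ε * |v j|) := Finset.sum_le_sum this
    _ = ε * (l1 v)^2 := by
        unfold l1
        rw [sq, Finset.sum_mul_sum, Finset.mul_sum]
        apply Finset.sum_congr rfl
        intro i _
        rw [Finset.mul_sum]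
        apply Finset.sum_congr rfl
        intro j _
        ring

lemma compat_set_bddBelow {M : Matrix ι ι ℝ} {S : Finset ι} {BB : ℝ} (hBBnn : 0 ≤ BB)
    (hBB : ∀ i j, |M i j| ≤ BB) :
    BddBelow {c : ℝ | ∃ v : ι → ℝ, l1 (restr Sᶜ v) ≤ 3 * l1 (restr S v) ∧ restr S v ≠ 0 ∧
      c = (S.card : ℝ) * (v ⬝ᵥ (M *ᵥ v)) / l1 (restr S v) ^ 2} := by
  use -(16 * S.card * BB)
  rintro c ⟨v, hv1, hv2, rfl⟩
  set L := l1 (restr S v) with hL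
  have hLpos : 0 < L := l1_pos_of_ne_zero hv2
  have hl1v : l1 v ≤ 4 * L := by
    rw [l1_split S v]
    linarith
  have hquad : |v ⬝ᵥ (M *ᵥ v)| ≤ BB * (l1 v)^2 := by
    have h0 : ∀ i j, |M i j - (0 : Matrix ι ι ℝ) i j| ≤ BB := by
      intro i j; simpa using hBB i j
    have := quad_diff_le hBBnn h0 v
    simpa using this
  have h1 : v ⬝ᵥ (M *ᵥ v) ≥ -(BB * (4*L)^2) := by
    have h2 : BB * (l1 v)^2 ≤ BB * (4*L)^2 := by
      apply mul_le_mul_of_nonneg_left _ hBBnn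
      apply pow_le_pow_left₀ (l1_nonneg v) hl1v
    have := (abs_le.1 hquad).1
    linarith
  rw [le_div_iff₀ (by positivity)]
  have hcard : (0:ℝ) ≤ (S.card : ℝ) := Nat.cast_nonneg _
  calc -(16 * S.card * BB) * L^2 = (S.card:ℝ) * (-(BB * (4*L)^2)) := by ring
    _ ≤ (S.card:ℝ) * (v ⬝ᵥ (M *ᵥ v)) := mul_le_mul_of_nonneg_left h1 hcard

lemma compat_empty (M : Matrix ι ι ℝ) : compat M (∅ : Finset ι) = 0 := by
  unfold compat
  convert Real.sInf_empty
  rw [Set.eq_empty_iff_forall_notMem]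
  rintro c ⟨v, _, hv2, _⟩
  apply hv2
  funext j
  simp [restr]

lemma compat_ge_of_perturb {M M' : Matrix ι ι ℝ} {S : Finset ι} (hS : S.Nonempty)
    {ε BB c : ℝ} (hε : 0 ≤ ε) (hBBnn : 0 ≤ BB)
    (hentry : ∀ i j, |M i j - M' i j| ≤ ε) (hBB : ∀ i j, |M' i j| ≤ BB)
    (hc : c ≤ compat M' S) :
    c - 16 * S.card * ε ≤ compat M S := by
  unfold compat
  apply le_csInf
  · -- nonempty
    obtain ⟨a, ha⟩ := hS
    refine ⟨(S.card : ℝ) * ((fun j => if j = a then (1:ℝ) else 0) ⬝ᵥ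
      (M *ᵥ (fun j => if j = a then (1:ℝ) else 0))) /
        l1 (restr S (fun j => if j = a then (1:ℝ) else 0)) ^ 2,
      (fun j => if j = a then (1:ℝ) else 0), ?_, ?_, rfl⟩
    · have h1 : l1 (restr Sᶜ (fun j => if j = a then (1:ℝ) else 0)) = 0 := by
        unfold l1 restr
        apply Finset.sum_eq_zero
        intro j _
        by_cases hj : j ∈ Sᶜ
        · simp only [hj, if_true]
          by_cases hja : j = a
          · subst hja
            exact absurd ha (Finset.mem_compl.1 hj)
          · simp [hja]
        · simp [hj]
      rw [h1]
      have : 0 ≤ l1 (restr S (fun j => if j = a then (1:ℝ) else 0)) := l1_nonneg _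
      linarith
    · intro hzero
      have := congrFun hzero a
      simp [restr, ha] at this
  · rintro b ⟨v, hv1, hv2, rfl⟩
    set L := l1 (restr S v) with hL
    have hLpos : 0 < L := l1_pos_of_ne_zero hv2
    have hl1v : l1 v ≤ 4 * L := by
      rw [l1_split S v]
      linarith
    have hquad : v ⬝ᵥ (M' *ᵥ v) - ε * (4*L)^2 ≤ v ⬝ᵥ (M *ᵥ v) := by
      have h1 := (abs_le.1 (quad_diff_le hε hentry v)).1
      have h2 : ε * (l1 v)^2 ≤ ε * (4*L)^2 := by
        apply mul_le_mul_of_nonneg_left _ hε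
        exact pow_le_pow_left₀ (l1_nonneg v) hl1v 2
      linarith
    have hmem : (S.card : ℝ) * (v ⬝ᵥ (M' *ᵥ v)) / L ^ 2 ∈
        {c : ℝ | ∃ v : ι → ℝ, l1 (restr Sᶜ v) ≤ 3 * l1 (restr S v) ∧ restr S v ≠ 0 ∧
          c = (S.card : ℝ) * (v ⬝ᵥ (M' *ᵥ v)) / l1 (restr S v) ^ 2} :=
      ⟨v, hv1, hv2, rfl⟩
    have hup : c ≤ (S.card : ℝ) * (v ⬝ᵥ (M' *ᵥ v)) / L ^ 2 :=
      hc.trans (csInf_le (compat_set_bddBelow hBBnn hBB) hmem)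
    have hcard : (0:ℝ) ≤ (S.card : ℝ) := Nat.cast_nonneg _
    have step : (S.card : ℝ) * (v ⬝ᵥ (M' *ᵥ v)) - (S.card : ℝ) * (ε * (4*L)^2) ≤
        (S.card : ℝ) * (v ⬝ᵥ (M *ᵥ v)) := by
      have := mul_le_mul_of_nonneg_left hquad hcard
      nlinarith
    rw [le_div_iff₀ (by positivity)]
    rw [le_div_iff₀ (by positivity)] at hup
    nlinarith [sq_nonneg L, mul_le_mul_of_nonneg_right hup (le_of_lt (by positivity : (0:ℝ) < 1))]



end CompatAux

section ProbAux
open Real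

lemma Dpos {p : ℝ} (hp0 : 0 ≤ p) (hp1 : p ≤ 1) (h : ℝ) : 0 < 1 - p + p * Real.exp h := by
  rcases eq_or_lt_of_le hp1 with rfl | hlt
  · simpa using Real.exp_pos h
  · have := mul_nonneg hp0 (Real.exp_pos h).le
    linarith

lemma hd1 {p : ℝ} (hp0 : 0 ≤ p) (hp1 : p ≤ 1) (h : ℝ) :
    HasDerivAt (fun h => p*h + h^2/8 - Real.log (1 - p + p * Real.exp h))
      (p + h/4 - p * Real.exp h / (1 - p + p * Real.exp h)) h := by
  have hD : HasDerivAt (fun h => 1 - p + p * Real.exp h) (p * Real.exp h) h := by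
    simpa using ((Real.hasDerivAt_exp h).const_mul p).const_add (1 - p)
  have hlog := hD.log (Dpos hp0 hp1 h).ne'
  have h1 : HasDerivAt (fun h : ℝ => p*h + h^2/8) (p + h/4) h := by
    have := ((hasDerivAt_id h).const_mul p).add (((hasDerivAt_pow 2 h)).div_const 8)
    refine this.congr_deriv ?_
    norm_num
    ring
  exact h1.sub hlog

lemma hd2 {p : ℝ} (hp0 : 0 ≤ p) (hp1 : p ≤ 1) (h : ℝ) :
    HasDerivAt (fun h => p + h/4 - p * Real.exp h / (1 - p + p * Real.exp h))
      (1/4 - (p * Real.exp h * (1 - p + p * Real.exp h) - p * Real.exp h * (p * Real.exp h)) /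
        (1 - p + p * Real.exp h)^2) h := by
  have hD : HasDerivAt (fun h => 1 - p + p * Real.exp h) (p * Real.exp h) h := by
    simpa using ((Real.hasDerivAt_exp h).const_mul p).const_add (1 - p)
  have hN : HasDerivAt (fun h => p * Real.exp h) (p * Real.exp h) h :=
    (Real.hasDerivAt_exp h).const_mul p
  have hq := hN.div hD (Dpos hp0 hp1 h).ne'
  have h1 : HasDerivAt (fun h : ℝ => p + h/4) (1/4) h := by
    simpa using ((hasDerivAt_id h).div_const 4).const_add p
  exact h1.sub hq

lemma phi2_nonneg_deriv {p : ℝ} (hp0 : 0 ≤ p) (hp1 : p ≤ 1) (h : ℝ) :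
    0 ≤ 1/4 - (p * Real.exp h * (1 - p + p * Real.exp h) - p * Real.exp h * (p * Real.exp h)) /
        (1 - p + p * Real.exp h)^2 := by
  set D := 1 - p + p * Real.exp h with hDdef
  have hD : 0 < D := Dpos hp0 hp1 h
  set q := p * Real.exp h / D with hq
  have key : (p * Real.exp h * D - p * Real.exp h * (p * Real.exp h)) / D^2 = q - q^2 := by
    rw [hq]
    field_simp
  rw [key]
  nlinarith [sq_nonneg (q - 1/2)]

lemma log_ineq {p : ℝ} (hp0 : 0 ≤ p) (hp1 : p ≤ 1) (h : ℝ) :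
    Real.log (1 - p + p * Real.exp h) ≤ p * h + h^2/8 := by
  set φ1 : ℝ → ℝ := fun h => p*h + h^2/8 - Real.log (1 - p + p * Real.exp h) with hφ1
  set φ2 : ℝ → ℝ := fun h => p + h/4 - p * Real.exp h / (1 - p + p * Real.exp h) with hφ2
  have hφ2zero : φ2 0 = 0 := by
    simp [hφ2]
  have hmono2 : Monotone φ2 := by
    have : ∀ x : ℝ, 0 ≤ deriv φ2 x := by
      intro x
      rw [(hd2 hp0 hp1 x).deriv]
      exact phi2_nonneg_deriv hp0 hp1 x
    exact monotone_of_deriv_nonneg (fun x => (hd2 hp0 hp1 x).differentiableAt) this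
  have hφ1zero : φ1 0 = 0 := by simp [hφ1]
  have goal : 0 ≤ φ1 h := by
    rcases le_total 0 h with hh | hh
    · have hmono1 : MonotoneOn φ1 (Set.Ici 0) := by
        apply monotoneOn_of_deriv_nonneg (convex_Ici 0)
          (Continuous.continuousOn (by fun_prop (disch := intro x; exact (Dpos hp0 hp1 x).ne')))
        · intro x hx
          exact ((hd1 hp0 hp1 x).differentiableAt).differentiableWithinAt
        · intro x hx
          rw [(hd1 hp0 hp1 x).deriv]
          have := hmono2 (le_of_lt (by simpa using hx) : (0:ℝ) ≤ x)
          rw [hφ2zero] at this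
          simpa [hφ2] using this
      have := hmono1 (Set.self_mem_Ici) (Set.mem_Ici.2 hh) hh
      rwa [hφ1zero] at this
    · have hanti1 : AntitoneOn φ1 (Set.Iic 0) := by
        apply antitoneOn_of_deriv_nonpos (convex_Iic 0)
          (Continuous.continuousOn (by fun_prop (disch := intro x; exact (Dpos hp0 hp1 x).ne')))
        · intro x hx
          exact ((hd1 hp0 hp1 x).differentiableAt).differentiableWithinAt
        · intro x hx
          rw [(hd1 hp0 hp1 x).deriv]
          have := hmono2 (le_of_lt (by simpa using hx) : x ≤ (0:ℝ))
          rw [hφ2zero] at this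
          simpa [hφ2] using this
      have := hanti1 (Set.mem_Iic.2 hh) Set.self_mem_Iic hh
      rwa [hφ1zero] at this
  have := goal
  simp only [hφ1, sub_nonneg] at this
  linarith

lemma hoeffding_scalar {p h : ℝ} (hp0 : 0 ≤ p) (hp1 : p ≤ 1) :
    (1-p) * Real.exp (-p*h) + p * Real.exp ((1-p)*h) ≤ Real.exp (h^2/8) := by
  have hD : 0 < 1 - p + p * Real.exp h := Dpos hp0 hp1 h
  have e1 : (1-p) * Real.exp (-p*h) + p * Real.exp ((1-p)*h)
      = Real.exp (-p*h) * (1 - p + p * Real.exp h) := by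
    have : Real.exp ((1-p)*h) = Real.exp h * Real.exp (-p*h) := by
      rw [← Real.exp_add]; ring_nf
    rw [this]; ring
  rw [e1, ← Real.exp_log hD, ← Real.exp_add]
  apply Real.exp_le_exp.2
  have := log_ineq hp0 hp1 h
  linarith

lemma integrable_of_bdd {Ω : Type*} {mΩ : MeasurableSpace Ω} {P : Measure Ω} [IsFiniteMeasure P]
    {f : Ω → ℝ} {C : ℝ} (hmeas : AEStronglyMeasurable f P) (hb : ∀ᵐ ω ∂P, |f ω| ≤ C) :
    Integrable f P :=
  ⟨hmeas, HasFiniteIntegral.of_bounded (C := C) (by simpa [Real.norm_eq_abs] using hb)⟩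

lemma exp_convex_bound {a b y t : ℝ} (hab : a < b) (hay : a ≤ y) (hyb : y ≤ b) :
    Real.exp (t*y) ≤ (b - y)/(b-a) * Real.exp (t*a) + (y-a)/(b-a) * Real.exp (t*b) := by
  have hba : 0 < b - a := by linarith
  have hθ0 : 0 ≤ (b - y)/(b-a) := div_nonneg (by linarith) hba.le
  have hθ'0 : 0 ≤ (y - a)/(b-a) := div_nonneg (by linarith) hba.le
  have hsum : (b - y)/(b-a) + (y - a)/(b-a) = 1 := by field_simp; ring
  have := convexOn_exp.2 (Set.mem_univ (t*a)) (Set.mem_univ (t*b)) hθ0 hθ'0 hsum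
  simp only [smul_eq_mul] at this
  have harg : (b - y)/(b-a) * (t*a) + (y - a)/(b-a) * (t*b) = t * y := by
    field_simp
    ring
  rw [harg] at this
  exact this







/-- Conditional Hoeffding's lemma. -/
lemma condexp_exp_le {Ω : Type*} {m0 : MeasurableSpace Ω} (P : Measure Ω) [IsProbabilityMeasure P]
    {m : MeasurableSpace Ω} (hm : m ≤ m0) {f : Ω → ℝ} (hf : Measurable[m0] f) {B : ℝ} (hB : 0 < B)
    (hbd : ∀ᵐ ω ∂P, |f ω| ≤ B) (l : ℝ) :
    (P[fun ω => Real.exp (l * (f ω - (P[f|m]) ω)) | m]) ≤ᵐ[P]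
      fun _ => Real.exp (l^2 * B^2 / 2) := by
  set C : Ω → ℝ := P[f|m] with hCdef
  have hCm : StronglyMeasurable[m] C := stronglyMeasurable_condExp
  have hCmeas : Measurable[m0] C := (hCm.measurable).mono hm le_rfl
  have hfint : Integrable f P := integrable_of_bdd hf.aestronglyMeasurable hbd
  have hCint : Integrable C P := integrable_condExp
  -- |C| ≤ B a.e.
  have hCbd : ∀ᵐ ω ∂P, |C ω| ≤ B := by
    have h1 : C ≤ᵐ[P] fun _ => B := by
      have := condExp_mono (m := m) hfint (integrable_const B)
        (hbd.mono fun ω h => (abs_le.1 h).2)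
      simpa [condExp_const hm] using this
    have h2 : (fun _ => -B) ≤ᵐ[P] C := by
      have := condExp_mono (m := m) (integrable_const (-B)) hfint
        (hbd.mono fun ω h => (abs_le.1 h).1)
      simpa [condExp_const hm] using this
    filter_upwards [h1, h2] with ω hω1 hω2
    exact abs_le.2 ⟨hω2, hω1⟩
  set Y : Ω → ℝ := fun ω => f ω - C ω with hYdef
  have hYmeas : Measurable[m0] Y := hf.sub hCmeas
  have hYbd : ∀ᵐ ω ∂P, |Y ω| ≤ 2*B := by
    filter_upwards [hbd, hCbd] with ω h1 h2
    simp only [hYdef]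
    have := abs_sub_abs_le_abs_sub (f ω) (C ω)
    calc |f ω - C ω| ≤ |f ω| + |C ω| := abs_sub _ _
      _ ≤ 2*B := by linarith
  have hYint : Integrable Y P := hfint.sub hCint
  have hYcond : P[Y|m] =ᵐ[P] 0 := by
    have h1 : P[Y|m] =ᵐ[P] P[f|m] - P[C|m] := condExp_sub hfint hCint m
    have h2 : P[C|m] = C := condExp_of_stronglyMeasurable hm hCm hCint
    filter_upwards [h1] with ω hω
    rw [hω, Pi.sub_apply, h2]
    simp [hCdef]
  -- the m-measurable coefficients
  set g1 : Ω → ℝ := fun ω =>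
    ((B - C ω) * Real.exp (l * (-B - C ω)) - (-B - C ω) * Real.exp (l * (B - C ω))) / (2*B)
    with hg1def
  set g2 : Ω → ℝ := fun ω =>
    (Real.exp (l * (B - C ω)) - Real.exp (l * (-B - C ω))) / (2*B) with hg2def
  have hCm' : Measurable[m] C := hCm.measurable
  have e1 : Measurable[m] fun ω => Real.exp (l * (-B - C ω)) :=
    Real.measurable_exp.comp ((measurable_const.sub hCm').const_mul l)
  have e2 : Measurable[m] fun ω => Real.exp (l * (B - C ω)) :=
    Real.measurable_exp.comp ((measurable_const.sub hCm').const_mul l)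
  have hg1m : StronglyMeasurable[m] g1 :=
    ((((measurable_const.sub hCm').mul e1).sub
      ((measurable_const.sub hCm').mul e2)).div_const _).stronglyMeasurable
  have hg2m : StronglyMeasurable[m] g2 :=
    ((e2.sub e1).div_const _).stronglyMeasurable
  -- bounds
  set M : ℝ := Real.exp (|l| * (2*B)) with hMdef
  have habs : ∀ ω, |C ω| ≤ B → (Real.exp (l * (-B - C ω)) ≤ M ∧ Real.exp (l * (B - C ω)) ≤ M) := by
    intro ω hω
    constructor <;>
    · apply Real.exp_le_exp.2
      calc _ ≤ |l * (_ - C ω)| := le_abs_self _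
        _ ≤ |l| * (2*B) := by
            rw [abs_mul]
            apply mul_le_mul_of_nonneg_left _ (abs_nonneg l)
            rw [abs_le]
            constructor <;> [skip; skip] <;> cases' abs_le.1 hω with h1 h2 <;> linarith
  have hMpos : 0 < M := Real.exp_pos _
  have hg1bd : ∀ᵐ ω ∂P, |g1 ω| ≤ 2*M := by
    filter_upwards [hCbd] with ω hω
    obtain ⟨ha, hb⟩ := habs ω hω
    have hC := abs_le.1 hω
    have e1p := Real.exp_pos (l * (-B - C ω))
    have e2p := Real.exp_pos (l * (B - C ω))
    rw [hg1def, abs_div, abs_of_pos (by linarith : (0:ℝ) < 2*B), div_le_iff₀ (by linarith)]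
    calc |(B - C ω) * Real.exp (l * (-B - C ω)) - (-B - C ω) * Real.exp (l * (B - C ω))|
        ≤ |(B - C ω) * Real.exp (l * (-B - C ω))| + |(-B - C ω) * Real.exp (l * (B - C ω))| :=
          abs_sub _ _
      _ ≤ (2*B) * M + (2*B) * M := by
          apply add_le_add <;> rw [abs_mul] <;> apply mul_le_mul <;>
            first
              | (rw [abs_le]; constructor <;> linarith)
              | (rw [abs_of_pos (by positivity)]; assumption)
              | positivity
              | linarith
      _ = 2*M*(2*B) := by ring
  have hg2bd : ∀ᵐ ω ∂P, |g2 ω| ≤ M/B := by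
    filter_upwards [hCbd] with ω hω
    obtain ⟨ha, hb⟩ := habs ω hω
    have e1p := Real.exp_pos (l * (-B - C ω))
    have e2p := Real.exp_pos (l * (B - C ω))
    rw [hg2def, abs_div, abs_of_pos (by linarith : (0:ℝ) < 2*B), div_le_div_iff₀ (by linarith) hB]
    calc |Real.exp (l * (B - C ω)) - Real.exp (l * (-B - C ω))| * B
        ≤ (Real.exp (l * (B - C ω)) + Real.exp (l * (-B - C ω))) * B := by
          apply mul_le_mul_of_nonneg_right _ hB.le
          rw [abs_le]; constructor <;> linarith
      _ ≤ (M + M) * B := by apply mul_le_mul_of_nonneg_right _ hB.le; linarith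
      _ = M * (2*B) := by ring
  -- pointwise convexity bound
  have hpt : ∀ᵐ ω ∂P, Real.exp (l * Y ω) ≤ g1 ω + g2 ω * Y ω := by
    filter_upwards [hbd, hCbd] with ω hω hCω
    have hfC := abs_le.1 hω
    have hab : -B - C ω < B - C ω := by linarith
    have h1 := exp_convex_bound (t := l) (y := Y ω) hab
      (by simp only [hYdef]; linarith) (by simp only [hYdef]; linarith)
    have hba : (B - C ω) - (-B - C ω) = 2*B := by ring
    rw [hba] at h1
    refine h1.trans_eq ?_
    rw [hg1def, hg2def]
    field_simp
    ring
  -- integrability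
  have hexpYmeas : Measurable[m0] fun ω => Real.exp (l * Y ω) :=
    Real.measurable_exp.comp (hYmeas.const_mul l)
  have hexpYbd : ∀ᵐ ω ∂P, |Real.exp (l * Y ω)| ≤ M := by
    filter_upwards [hYbd] with ω hω
    rw [abs_of_pos (Real.exp_pos _)]
    apply Real.exp_le_exp.2
    calc l * Y ω ≤ |l * Y ω| := le_abs_self _
      _ ≤ |l| * (2*B) := by rw [abs_mul]; exact mul_le_mul_of_nonneg_left hω (abs_nonneg l)
  have hexpYint : Integrable (fun ω => Real.exp (l * Y ω)) P :=
    integrable_of_bdd hexpYmeas.aestronglyMeasurable hexpYbd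
  have hg1meas : Measurable[m0] g1 := (hg1m.measurable).mono hm le_rfl
  have hg2meas : Measurable[m0] g2 := (hg2m.measurable).mono hm le_rfl
  have hg1int : Integrable g1 P := integrable_of_bdd hg1meas.aestronglyMeasurable hg1bd
  have hg2Ybd : ∀ᵐ ω ∂P, |g2 ω * Y ω| ≤ (M/B) * (2*B) := by
    filter_upwards [hg2bd, hYbd] with ω h1 h2
    rw [abs_mul]
    exact mul_le_mul h1 h2 (abs_nonneg _) (by positivity)
  have hg2Yint : Integrable (g2 * Y) P :=
    integrable_of_bdd ((hg2meas.mul hYmeas)).aestronglyMeasurable hg2Ybd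
  have hRHSint : Integrable (fun ω => g1 ω + g2 ω * Y ω) P := hg1int.add hg2Yint
  -- condexp computation
  have hmono := condExp_mono (m := m) hexpYint hRHSint hpt
  have hsum : P[fun ω => g1 ω + g2 ω * Y ω|m] =ᵐ[P] fun ω => g1 ω + g2 ω * (P[Y|m]) ω := by
    have h1 : P[fun ω => g1 ω + g2 ω * Y ω|m] =ᵐ[P] P[g1|m] + P[g2 * Y|m] :=
      condExp_add hg1int hg2Yint m
    have h2 : P[g1|m] = g1 := condExp_of_stronglyMeasurable hm hg1m hg1int
    have h3 : P[g2 * Y|m] =ᵐ[P] g2 * P[Y|m] :=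
      condExp_mul_of_stronglyMeasurable_left hg2m hg2Yint hYint
    filter_upwards [h1, h3] with ω hω1 hω3
    simp only [hω1, Pi.add_apply, h2, hω3, Pi.mul_apply]
  have hsum2 : P[fun ω => g1 ω + g2 ω * Y ω|m] =ᵐ[P] g1 := by
    filter_upwards [hsum, hYcond] with ω h1 h2
    simp only [h1, h2, Pi.zero_apply, mul_zero, add_zero]
  -- final scalar bound on g1
  have hg1le : ∀ᵐ ω ∂P, g1 ω ≤ Real.exp (l^2 * B^2 / 2) := by
    filter_upwards [hCbd] with ω hω
    have hC := abs_le.1 hω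
    set p : ℝ := (B + C ω)/(2*B) with hpdef
    have hp0 : 0 ≤ p := div_nonneg (by linarith) (by linarith)
    have hp1 : p ≤ 1 := by
      rw [hpdef, div_le_one (by linarith)]; linarith
    have key := hoeffding_scalar (p := p) (h := l * (2*B)) hp0 hp1
    have harg1 : -p * (l * (2*B)) = l * (-B - C ω) := by
      rw [hpdef]; field_simp; ring
    have harg2 : (1 - p) * (l * (2*B)) = l * (B - C ω) := by
      rw [hpdef]; field_simp; ring
    have hform : g1 ω = (1-p) * Real.exp (-p * (l * (2*B))) + p * Real.exp ((1-p) * (l * (2*B))) := by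
      rw [harg1, harg2, hg1def, hpdef]
      field_simp
      ring
    have hexp : (l * (2*B))^2/8 = l^2 * B^2/2 := by ring
    rw [hform]
    rw [hexp] at key
    exact key
  calc P[fun ω => Real.exp (l * (f ω - C ω))|m]
      ≤ᵐ[P] P[fun ω => g1 ω + g2 ω * Y ω|m] := hmono
    _ ≤ᵐ[P] fun _ => Real.exp (l^2 * B^2 / 2) := by
        filter_upwards [hsum2, hg1le] with ω h1 h2
        rw [h1]; exact h2





lemma condexp_abs_le {Ω : Type*} {m0 : MeasurableSpace Ω} {P : Measure Ω} [IsProbabilityMeasure P]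
    {m : MeasurableSpace Ω} (hm : m ≤ m0) {f : Ω → ℝ} (hint : Integrable f P) {B : ℝ}
    (hbd : ∀ᵐ ω ∂P, |f ω| ≤ B) : ∀ᵐ ω ∂P, |(P[f|m]) ω| ≤ B := by
  have h1 : P[f|m] ≤ᵐ[P] fun _ => B := by
    have := condExp_mono (m := m) hint (integrable_const B)
      (hbd.mono fun ω h => (abs_le.1 h).2)
    simpa [condExp_const hm] using this
  have h2 : (fun _ => -B) ≤ᵐ[P] P[f|m] := by
    have := condExp_mono (m := m) (integrable_const (-B)) hint
      (hbd.mono fun ω h => (abs_le.1 h).1)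
    simpa [condExp_const hm] using this
  filter_upwards [h1, h2] with ω hω1 hω2
  exact abs_le.2 ⟨hω2, hω1⟩

lemma mgf_bound {Ω : Type*} {m0 : MeasurableSpace Ω} (P : Measure Ω) [IsProbabilityMeasure P]
    (F : Filtration ℕ m0) {τ : ℕ} {f : ℕ → Ω → ℝ}
    (hmeas : ∀ t, 1 ≤ t → t ≤ τ → Measurable[F t] (f t))
    {B : ℝ} (hB : 0 < B) (hbd : ∀ t, 1 ≤ t → t ≤ τ → ∀ᵐ ω ∂P, |f t ω| ≤ B) (l : ℝ) :
    ∀ n, n ≤ τ →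
      ∫ ω, Real.exp (l * ∑ t ∈ Finset.Icc 1 n, (f t ω - (P[f t|F (t-1)]) ω)) ∂P ≤
        Real.exp (n * (l^2 * B^2 / 2)) := by
  set Y : ℕ → Ω → ℝ := fun t ω => f t ω - (P[f t|F (t-1)]) ω with hYdef
  have hfmeas0 : ∀ t, 1 ≤ t → t ≤ τ → Measurable[m0] (f t) :=
    fun t h1 h2 => (hmeas t h1 h2).mono (F.le t) le_rfl
  have hfint : ∀ t, 1 ≤ t → t ≤ τ → Integrable (f t) P :=
    fun t h1 h2 => integrable_of_bdd (hfmeas0 t h1 h2).aestronglyMeasurable (hbd t h1 h2)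
  have hYmeas : ∀ t, 1 ≤ t → t ≤ τ → Measurable[m0] (Y t) := fun t h1 h2 =>
    (hfmeas0 t h1 h2).sub ((stronglyMeasurable_condExp.measurable).mono (F.le (t-1)) le_rfl)
  have hYbd : ∀ t, 1 ≤ t → t ≤ τ → ∀ᵐ ω ∂P, |Y t ω| ≤ 2*B := by
    intro t h1 h2
    filter_upwards [hbd t h1 h2, condexp_abs_le (F.le (t-1)) (hfint t h1 h2) (hbd t h1 h2)]
      with ω hω1 hω2
    calc |Y t ω| ≤ |f t ω| + |(P[f t|F (t-1)]) ω| := abs_sub _ _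
      _ ≤ 2*B := by linarith
  -- strong measurability of partial sums w.r.t. F n
  have hSmeas : ∀ n ≤ τ, StronglyMeasurable[F n] fun ω => ∑ t ∈ Finset.Icc 1 n, Y t ω := by
    intro n hn
    apply Finset.stronglyMeasurable_fun_sum
    intro t ht
    obtain ⟨ht1, ht2⟩ := Finset.mem_Icc.1 ht
    have h1 : StronglyMeasurable[F t] (f t) := (hmeas t ht1 (ht2.trans hn)).stronglyMeasurable
    have h2 : StronglyMeasurable[F (t-1)] (P[f t|F (t-1)]) := stronglyMeasurable_condExp
    exact (h1.mono (F.mono ht2)).sub (h2.mono (F.mono ((Nat.sub_le t 1).trans ht2)))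
  have hSbd : ∀ n ≤ τ, ∀ᵐ ω ∂P, |∑ t ∈ Finset.Icc 1 n, Y t ω| ≤ n * (2*B) := by
    intro n hn
    have hall : ∀ᵐ ω ∂P, ∀ t, t ∈ Finset.Icc 1 n → |Y t ω| ≤ 2*B := by
      rw [ae_all_iff]
      intro t
      by_cases ht : t ∈ Finset.Icc 1 n
      · obtain ⟨ht1, ht2⟩ := Finset.mem_Icc.1 ht
        filter_upwards [hYbd t ht1 (ht2.trans hn)] with ω hω _
        exact hω
      · filter_upwards with ω h
        exact absurd h ht
    filter_upwards [hall] with ω hω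
    calc |∑ t ∈ Finset.Icc 1 n, Y t ω| ≤ ∑ t ∈ Finset.Icc 1 n, |Y t ω| :=
        Finset.abs_sum_le_sum_abs _ _
      _ ≤ ∑ t ∈ Finset.Icc 1 n, (2*B) := Finset.sum_le_sum hω
      _ ≤ n * (2*B) := by
          rw [Finset.sum_const, nsmul_eq_mul]
          have : (Finset.Icc 1 n).card ≤ n := by
            rw [Nat.card_Icc]; omega
          apply mul_le_mul_of_nonneg_right _ (by linarith)
          exact_mod_cast this
  intro n
  induction n with
  | zero => intro _; simp
  | succ n IH =>
    intro hn1
    have hn : n ≤ τ := le_of_lt (Nat.lt_of_lt_of_le (Nat.lt_succ_self n) hn1)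
    set S : Ω → ℝ := fun ω => ∑ t ∈ Finset.Icc 1 n, Y t ω with hSdef
    set g : Ω → ℝ := fun ω => Real.exp (l * S ω) with hgdef
    set h : Ω → ℝ := fun ω => Real.exp (l * Y (n+1) ω) with hhdef
    have hsplit : ∀ ω, Real.exp (l * ∑ t ∈ Finset.Icc 1 (n+1), Y t ω) = g ω * h ω := by
      intro ω
      rw [hgdef, hhdef, ← Real.exp_add, ← mul_add]
      congr 1
      rw [← Finset.sum_Icc_succ_top (by omega : 1 ≤ n + 1)]
    have hgmeas : Measurable[m0] g :=
      Real.measurable_exp.comp ((((hSmeas n hn).measurable).mono (F.le n) le_rfl).const_mul l)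
    have hgbd : ∀ᵐ ω ∂P, |g ω| ≤ Real.exp (|l| * (n * (2*B))) := by
      filter_upwards [hSbd n hn] with ω hω
      rw [hgdef, abs_of_pos (Real.exp_pos _)]
      apply Real.exp_le_exp.2
      calc l * S ω ≤ |l * S ω| := le_abs_self _
        _ ≤ |l| * (n * (2*B)) := by
            rw [abs_mul]; exact mul_le_mul_of_nonneg_left hω (abs_nonneg l)
    have hgnonneg : ∀ ω, 0 ≤ g ω := fun ω => (Real.exp_pos _).le
    have hgint : Integrable g P := integrable_of_bdd hgmeas.aestronglyMeasurable hgbd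
    have hhmeas : Measurable[m0] h :=
      Real.measurable_exp.comp ((hYmeas (n+1) (by omega) hn1).const_mul l)
    have hhbd : ∀ᵐ ω ∂P, |h ω| ≤ Real.exp (|l| * (2*B)) := by
      filter_upwards [hYbd (n+1) (by omega) hn1] with ω hω
      rw [hhdef, abs_of_pos (Real.exp_pos _)]
      apply Real.exp_le_exp.2
      calc l * Y (n+1) ω ≤ |l * Y (n+1) ω| := le_abs_self _
        _ ≤ |l| * (2*B) := by rw [abs_mul]; exact mul_le_mul_of_nonneg_left hω (abs_nonneg l)
    have hhint : Integrable h P := integrable_of_bdd hhmeas.aestronglyMeasurable hhbd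
    have hghbd : ∀ᵐ ω ∂P, |g ω * h ω| ≤
        Real.exp (|l| * (n * (2*B))) * Real.exp (|l| * (2*B)) := by
      filter_upwards [hgbd, hhbd] with ω h1 h2
      rw [abs_mul]
      exact mul_le_mul h1 h2 (abs_nonneg _) (Real.exp_pos _).le
    have hghint : Integrable (g * h) P :=
      integrable_of_bdd (hgmeas.mul hhmeas).aestronglyMeasurable hghbd
    -- condexp bound on h
    have hcond : (P[h|F n]) ≤ᵐ[P] fun _ => Real.exp (l^2 * B^2 / 2) := by
      have := condexp_exp_le P (F.le n) (hfmeas0 (n+1) (by omega) hn1) hB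
        (hbd (n+1) (by omega) hn1) l
      exact this
    have hcondbd : ∀ᵐ ω ∂P, |(P[h|F n]) ω| ≤ Real.exp (|l| * (2*B)) :=
      condexp_abs_le (F.le n) hhint hhbd
    have hpull : P[g * h|F n] =ᵐ[P] g * P[h|F n] :=
      condExp_mul_of_stronglyMeasurable_left
        ((Real.continuous_exp.comp_stronglyMeasurable ((hSmeas n hn).const_mul l))) hghint hhint
    calc ∫ ω, Real.exp (l * ∑ t ∈ Finset.Icc 1 (n+1), Y t ω) ∂P
        = ∫ ω, (g * h) ω ∂P := by
          apply integral_congr_ae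
          filter_upwards with ω
          exact hsplit ω
      _ = ∫ ω, (P[g * h|F n]) ω ∂P := (integral_condExp (F.le n)).symm
      _ = ∫ ω, g ω * (P[h|F n]) ω ∂P := by
          apply integral_congr_ae
          filter_upwards [hpull] with ω hω
          simpa using hω
      _ ≤ ∫ ω, g ω * Real.exp (l^2 * B^2 / 2) ∂P := by
          apply integral_mono_ae
          · apply integrable_of_bdd
              ((hgmeas.mul ((stronglyMeasurable_condExp.measurable).mono (F.le n)
                le_rfl)).aestronglyMeasurable)
            · filter_upwards [hgbd, hcondbd] with ω h1 h2
              rw [Pi.mul_apply, abs_mul]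
              exact mul_le_mul h1 h2 (abs_nonneg _) (Real.exp_pos _).le
          · exact hgint.mul_const _
          · filter_upwards [hcond] with ω hω
            exact mul_le_mul_of_nonneg_left hω (hgnonneg ω)
      _ = Real.exp (l^2 * B^2/2) * ∫ ω, g ω ∂P := by
          rw [integral_mul_const]; ring
      _ ≤ Real.exp (l^2 * B^2/2) * Real.exp (n * (l^2 * B^2 / 2)) := by
          apply mul_le_mul_of_nonneg_left (IH hn) (Real.exp_pos _).le
      _ = Real.exp ((n+1 : ℕ) * (l^2 * B^2 / 2)) := by
          rw [← Real.exp_add]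
          congr 1
          push_cast
          ring







lemma azuma_tail {Ω : Type*} {m0 : MeasurableSpace Ω} (P : Measure Ω) [IsProbabilityMeasure P]
    (F : Filtration ℕ m0) {τ : ℕ} {f : ℕ → Ω → ℝ}
    (hmeas : ∀ t, 1 ≤ t → t ≤ τ → Measurable[F t] (f t))
    {B : ℝ} (hB : 0 < B) (hbd : ∀ t, 1 ≤ t → t ≤ τ → ∀ᵐ ω ∂P, |f t ω| ≤ B)
    {ε : ℝ} (hε : 0 < ε) :
    P {ω | (τ:ℝ)*ε ≤ |∑ t ∈ Finset.Icc 1 τ, (f t ω - (P[f t|F (t-1)]) ω)|} ≤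
      ENNReal.ofReal (2 * Real.exp (-((τ:ℝ)*ε^2) / (2*B^2))) := by
  set X : Ω → ℝ := fun ω => ∑ t ∈ Finset.Icc 1 τ, (f t ω - (P[f t|F (t-1)]) ω) with hXdef
  have hfmeas0 : ∀ t, 1 ≤ t → t ≤ τ → Measurable[m0] (f t) :=
    fun t h1 h2 => (hmeas t h1 h2).mono (F.le t) le_rfl
  have hXmeas : Measurable[m0] X := by
    apply Finset.measurable_fun_sum
    intro t ht
    obtain ⟨ht1, ht2⟩ := Finset.mem_Icc.1 ht
    exact (hfmeas0 t ht1 ht2).sub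
      ((stronglyMeasurable_condExp.measurable).mono (F.le (t-1)) le_rfl)
  have hXbd : ∀ᵐ ω ∂P, |X ω| ≤ (τ:ℝ) * (2*B) := by
    have hall : ∀ᵐ ω ∂P, ∀ t, t ∈ Finset.Icc 1 τ → |f t ω - (P[f t|F (t-1)]) ω| ≤ 2*B := by
      rw [ae_all_iff]
      intro t
      by_cases ht : t ∈ Finset.Icc 1 τ
      · obtain ⟨ht1, ht2⟩ := Finset.mem_Icc.1 ht
        have hint : Integrable (f t) P :=
          integrable_of_bdd (hfmeas0 t ht1 ht2).aestronglyMeasurable (hbd t ht1 ht2)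
        filter_upwards [hbd t ht1 ht2, condexp_abs_le (F.le (t-1)) hint (hbd t ht1 ht2)]
          with ω h1 h2 _
        calc |f t ω - (P[f t|F (t-1)]) ω| ≤ |f t ω| + |(P[f t|F (t-1)]) ω| := abs_sub _ _
          _ ≤ 2*B := by linarith
      · filter_upwards with ω h
        exact absurd h ht
    filter_upwards [hall] with ω hω
    calc |X ω| ≤ ∑ t ∈ Finset.Icc 1 τ, |f t ω - (P[f t|F (t-1)]) ω| :=
        Finset.abs_sum_le_sum_abs _ _
      _ ≤ ∑ _t ∈ Finset.Icc 1 τ, (2*B) := Finset.sum_le_sum hω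
      _ ≤ (τ:ℝ) * (2*B) := by
          rw [Finset.sum_const, nsmul_eq_mul]
          apply mul_le_mul_of_nonneg_right _ (by linarith)
          have : (Finset.Icc 1 τ).card ≤ τ := by rw [Nat.card_Icc]; omega
          exact_mod_cast this
  have hint_exp : ∀ l : ℝ, Integrable (fun ω => Real.exp (l * X ω)) P := by
    intro l
    apply integrable_of_bdd (C := Real.exp (|l| * ((τ:ℝ) * (2*B))))
      ((hXmeas.const_mul l).exp).aestronglyMeasurable
    filter_upwards [hXbd] with ω hω
    rw [abs_of_pos (Real.exp_pos _)]
    apply Real.exp_le_exp.2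
    calc l * X ω ≤ |l * X ω| := le_abs_self _
      _ ≤ |l| * ((τ:ℝ) * (2*B)) := by
          rw [abs_mul]; exact mul_le_mul_of_nonneg_left hω (abs_nonneg l)
  have hmgf : ∀ l : ℝ, mgf X P l ≤ Real.exp ((τ:ℝ) * (l^2 * B^2 / 2)) := by
    intro l
    exact mgf_bound P F hmeas hB hbd l τ le_rfl
  set e : ℝ := Real.exp (-((τ:ℝ)*ε^2) / (2*B^2)) with hedef
  have he1 : Real.exp (-(ε/B^2) * ((τ:ℝ)*ε)) * Real.exp ((τ:ℝ) * ((ε/B^2)^2 * B^2 / 2)) = e := by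
    rw [← Real.exp_add, hedef]
    congr 1
    field_simp
    ring
  have he2 : Real.exp (-(-(ε/B^2)) * (-((τ:ℝ)*ε))) *
      Real.exp ((τ:ℝ) * ((-(ε/B^2))^2 * B^2 / 2)) = e := by
    rw [← Real.exp_add, hedef]
    congr 1
    field_simp
    ring
  have hup : P {ω | (τ:ℝ)*ε ≤ X ω} ≤ ENNReal.ofReal e := by
    rw [ENNReal.le_ofReal_iff_toReal_le (measure_ne_top _ _) (Real.exp_pos _).le]
    have h1 := measure_ge_le_exp_mul_mgf (X := X) (μ := P) (t := ε/B^2) ((τ:ℝ)*ε)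
      (by positivity) (hint_exp _)
    calc (P {ω | (τ:ℝ)*ε ≤ X ω}).toReal ≤
        Real.exp (-(ε/B^2) * ((τ:ℝ)*ε)) * mgf X P (ε/B^2) := h1
      _ ≤ Real.exp (-(ε/B^2) * ((τ:ℝ)*ε)) * Real.exp ((τ:ℝ) * ((ε/B^2)^2 * B^2 / 2)) :=
          mul_le_mul_of_nonneg_left (hmgf _) (Real.exp_pos _).le
      _ = e := he1
  have hlo : P {ω | X ω ≤ -((τ:ℝ)*ε)} ≤ ENNReal.ofReal e := by
    rw [ENNReal.le_ofReal_iff_toReal_le (measure_ne_top _ _) (Real.exp_pos _).le]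
    have h1 := measure_le_le_exp_mul_mgf (X := X) (μ := P) (t := -(ε/B^2)) (-((τ:ℝ)*ε))
      (neg_nonpos.2 (by positivity)) (hint_exp _)
    calc (P {ω | X ω ≤ -((τ:ℝ)*ε)}).toReal ≤
        Real.exp (-(-(ε/B^2)) * (-((τ:ℝ)*ε))) * mgf X P (-(ε/B^2)) := h1
      _ ≤ Real.exp (-(-(ε/B^2)) * (-((τ:ℝ)*ε))) *
            Real.exp ((τ:ℝ) * ((-(ε/B^2))^2 * B^2 / 2)) :=
          mul_le_mul_of_nonneg_left (hmgf _) (Real.exp_pos _).le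
      _ = e := he2
  have hsub : {ω | (τ:ℝ)*ε ≤ |X ω|} ⊆ {ω | (τ:ℝ)*ε ≤ X ω} ∪ {ω | X ω ≤ -((τ:ℝ)*ε)} := by
    intro ω hω
    simp only [Set.mem_setOf_eq, Set.mem_union]
    rcases abs_cases (X ω) with ⟨h1, _⟩ | ⟨h1, _⟩
    · left; simp only [Set.mem_setOf_eq] at hω; linarith
    · right; simp only [Set.mem_setOf_eq] at hω; linarith
  calc P {ω | (τ:ℝ)*ε ≤ |X ω|} ≤ P ({ω | (τ:ℝ)*ε ≤ X ω} ∪ {ω | X ω ≤ -((τ:ℝ)*ε)}) :=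
      measure_mono hsub
    _ ≤ P {ω | (τ:ℝ)*ε ≤ X ω} + P {ω | X ω ≤ -((τ:ℝ)*ε)} := measure_union_le _ _
    _ ≤ ENNReal.ofReal e + ENNReal.ofReal e := add_le_add hup hlo
    _ = ENNReal.ofReal (2 * e) := by
        rw [← ENNReal.ofReal_add (Real.exp_pos _).le (Real.exp_pos _).le]
        congr 1
        ring

end ProbAux


set_option maxHeartbeats 4000000 in
/-- **Compatibility condition for the empirical Gram matrix**: if the conditional-expectation
Gram matrix `Σ̄_τ` satisfies the compatibility condition with constant `φ₀²`, then with high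
probability so does the empirical Gram matrix `Σ̂_τ`, with constant `φ₀²/2`. -/
theorem compat_empirical_gram {Ω : Type*} {m0 : MeasurableSpace Ω} (P : Measure Ω)
    [IsProbabilityMeasure P] {d : ℕ} (F : Filtration ℕ m0) (τ : ℕ) (hτ : 1 ≤ τ)
    (x : ℕ → Ω → Fin d → ℝ)
    (hadapted : ∀ t, 1 ≤ t → t ≤ τ → Measurable[F t] (x t))
    (xmax : ℝ) (hxmax : 0 < xmax)
    (hbdd : ∀ t, 1 ≤ t → t ≤ τ → ∀ᵐ ω ∂P, ∀ j, |x t ω j| ≤ xmax)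
    (S0 : Finset (Fin d)) (φ0 : ℝ) (hφ0 : 0 < φ0)
    (hcompat : ∀ᵐ ω ∂P,
      compat (Matrix.of fun i j => (τ : ℝ)⁻¹ *
          ∑ t ∈ Finset.Icc 1 τ, (P[fun ω' => x t ω' i * x t ω' j | F (t - 1)]) ω) S0 ≥
        φ0 ^ 2) :
    P {ω | compat (Matrix.of fun i j =>
          (τ : ℝ)⁻¹ * ∑ t ∈ Finset.Icc 1 τ, x t ω i * x t ω j) S0 ≥ φ0 ^ 2 / 2} ≥
      ENNReal.ofReal
        (1 - 2 * d ^ 2 * Real.exp (-(τ * φ0 ^ 4) / (2048 * xmax ^ 4 * (S0.card : ℝ) ^ 2))) := by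
  classical
  -- abbreviations
  set s : ℕ := S0.card with hsdef
  rcases Finset.eq_empty_or_nonempty S0 with hS0 | hS0
  · -- degenerate case: S0 empty, hypothesis hcompat is a.e. false
    exfalso
    have hne : (MeasureTheory.ae P).NeBot := ae_neBot.2 (IsProbabilityMeasure.ne_zero P)
    obtain ⟨ω, hω⟩ := hcompat.exists
    rw [hS0, compat_empty] at hω
    nlinarith
  have hs1 : 1 ≤ s := Finset.card_pos.2 hS0
  have hsR : (0:ℝ) < (s:ℝ) := by exact_mod_cast hs1
  have hτR : (0:ℝ) < (τ:ℝ) := by exact_mod_cast hτ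
  set B : ℝ := xmax^2 with hBdef
  have hB : 0 < B := by positivity
  set ε : ℝ := φ0^2 / (32 * s) with hεdef
  have hε : 0 < ε := by positivity
  set f : Fin d → Fin d → ℕ → Ω → ℝ := fun i j t ω => x t ω i * x t ω j with hfdef
  have hfm : ∀ (i j : Fin d) t, 1 ≤ t → t ≤ τ → Measurable[F t] (f i j t) := by
    intro i j t h1 h2
    exact ((measurable_pi_apply i).comp (hadapted t h1 h2)).mul
      ((measurable_pi_apply j).comp (hadapted t h1 h2))
  have hfbd : ∀ (i j : Fin d) t, 1 ≤ t → t ≤ τ → ∀ᵐ ω ∂P, |f i j t ω| ≤ B := by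
    intro i j t h1 h2
    filter_upwards [hbdd t h1 h2] with ω hω
    rw [hfdef]
    simp only []
    rw [abs_mul, hBdef, sq]
    exact mul_le_mul (hω i) (hω j) (abs_nonneg _) (le_trans (abs_nonneg _) (hω i))
  -- the bad events
  set bad : Fin d → Fin d → Set Ω := fun i j =>
    {ω | (τ:ℝ)*ε ≤ |∑ t ∈ Finset.Icc 1 τ, (f i j t ω - (P[f i j t|F (t-1)]) ω)|} with hbaddef
  have hfm0 : ∀ (i j : Fin d) t, 1 ≤ t → t ≤ τ → Measurable[m0] (f i j t) :=
    fun i j t h1 h2 => (hfm i j t h1 h2).mono (F.le t) le_rfl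
  have hbadmeas : ∀ i j, MeasurableSet (bad i j) := by
    intro i j
    apply measurableSet_le measurable_const
    apply Measurable.abs
    apply Finset.measurable_fun_sum
    intro t ht
    obtain ⟨ht1, ht2⟩ := Finset.mem_Icc.1 ht
    exact (hfm0 i j t ht1 ht2).sub
      ((stronglyMeasurable_condExp.measurable).mono (F.le (t-1)) le_rfl)
  set e : ℝ := Real.exp (-((τ:ℝ) * φ0 ^ 4) / (2048 * xmax ^ 4 * (s : ℝ) ^ 2)) with hedef
  have hexp_eq : -((τ:ℝ)*ε^2) / (2*B^2) = -((τ:ℝ) * φ0 ^ 4) / (2048 * xmax ^ 4 * (s : ℝ) ^ 2) := by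
    have hs0 : (s:ℝ) ≠ 0 := hsR.ne'
    have hx0 : xmax ≠ 0 := hxmax.ne'
    have key : (φ0^2/(32*(s:ℝ)))^2 * (2048 * xmax^4 * (s:ℝ)^2) = φ0^4 * (2 * (xmax^2)^2) := by
      rw [div_pow, div_mul_eq_mul_div, div_eq_iff (by positivity)]
      ring
    rw [hεdef, hBdef, div_eq_div_iff (by positivity) (by positivity)]
    linear_combination (-(τ:ℝ)) * key
  have hbadP : ∀ i j, P (bad i j) ≤ ENNReal.ofReal (2 * e) := by
    intro i j
    have := azuma_tail P F (hfm i j) hB (hfbd i j) hε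
    rw [hexp_eq] at this
    exact this
  set badU : Set Ω := ⋃ i, ⋃ j, bad i j with hbadUdef
  have hbadUmeas : MeasurableSet badU :=
    MeasurableSet.iUnion fun i => MeasurableSet.iUnion fun j => hbadmeas i j
  have hU : P badU ≤ ENNReal.ofReal (2 * (d:ℝ)^2 * e) := by
    calc P badU ≤ ∑ i : Fin d, P (⋃ j, bad i j) := measure_iUnion_fintype_le P _
      _ ≤ ∑ _i : Fin d, ∑ _j : Fin d, ENNReal.ofReal (2*e) := by
          apply Finset.sum_le_sum
          intro i _
          calc P (⋃ j, bad i j) ≤ ∑ j : Fin d, P (bad i j) := measure_iUnion_fintype_le P _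
            _ ≤ ∑ _j : Fin d, ENNReal.ofReal (2*e) := Finset.sum_le_sum fun j _ => hbadP i j
      _ = (d : ℝ≥0∞) * ((d : ℝ≥0∞) * ENNReal.ofReal (2*e)) := by
          simp [Finset.sum_const, Finset.card_univ, mul_assoc]
      _ = ENNReal.ofReal (2 * (d:ℝ)^2 * e) := by
          rw [← ENNReal.ofReal_natCast d, ← ENNReal.ofReal_mul (by positivity),
            ← ENNReal.ofReal_mul (by positivity)]
          congr 1
          ring
  -- good a.e. event
  have haebd : ∀ᵐ ω ∂P, ∀ (i j : Fin d) (t : ℕ), t ∈ Finset.Icc 1 τ →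
      |(P[f i j t|F (t-1)]) ω| ≤ B := by
    rw [ae_all_iff]
    intro i
    rw [ae_all_iff]
    intro j
    rw [ae_all_iff]
    intro t
    by_cases ht : t ∈ Finset.Icc 1 τ
    · obtain ⟨ht1, ht2⟩ := Finset.mem_Icc.1 ht
      have hint : Integrable (f i j t) P :=
        integrable_of_bdd (hfm0 i j t ht1 ht2).aestronglyMeasurable (hfbd i j t ht1 ht2)
      filter_upwards [condexp_abs_le (F.le (t-1)) hint (hfbd i j t ht1 ht2)] with ω hω _
      exact hω
    · filter_upwards with ω h
      exact absurd h ht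
  set Gprop : Ω → Prop := fun ω =>
    (compat (Matrix.of fun i j => (τ : ℝ)⁻¹ *
      ∑ t ∈ Finset.Icc 1 τ, (P[fun ω' => x t ω' i * x t ω' j | F (t - 1)]) ω) S0 ≥ φ0 ^ 2) ∧
    (∀ (i j : Fin d) (t : ℕ), t ∈ Finset.Icc 1 τ → |(P[f i j t|F (t-1)]) ω| ≤ B) with hGdef
  have haeG : ∀ᵐ ω ∂P, Gprop ω := hcompat.and haebd
  -- key inclusion
  have hincl : badUᶜ ∩ {ω | Gprop ω} ⊆ {ω | compat (Matrix.of fun i j =>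
      (τ : ℝ)⁻¹ * ∑ t ∈ Finset.Icc 1 τ, x t ω i * x t ω j) S0 ≥ φ0 ^ 2 / 2} := by
    rintro ω ⟨hωbad, hωG⟩
    obtain ⟨hωc, hωb⟩ := hωG
    simp only [Set.mem_compl_iff, hbadUdef, Set.mem_iUnion, not_exists] at hωbad
    set M : Matrix (Fin d) (Fin d) ℝ := Matrix.of fun i j =>
      (τ : ℝ)⁻¹ * ∑ t ∈ Finset.Icc 1 τ, x t ω i * x t ω j with hMdef
    set M' : Matrix (Fin d) (Fin d) ℝ := Matrix.of fun i j =>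
      (τ : ℝ)⁻¹ * ∑ t ∈ Finset.Icc 1 τ, (P[fun ω' => x t ω' i * x t ω' j | F (t - 1)]) ω
      with hM'def
    have hcardIcc : ((Finset.Icc 1 τ).card : ℝ) = (τ : ℝ) := by
      rw [Nat.card_Icc]
      norm_cast
    have hentry : ∀ i j, |M i j - M' i j| ≤ ε := by
      intro i j
      have hdiff : M i j - M' i j =
          (τ:ℝ)⁻¹ * ∑ t ∈ Finset.Icc 1 τ, (f i j t ω - (P[f i j t|F (t-1)]) ω) := by
        rw [hMdef, hM'def]
        simp only [Matrix.of_apply]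
        rw [Finset.sum_sub_distrib]
        ring
      have hnotbad := hωbad i j
      rw [Set.mem_setOf_eq, not_le] at hnotbad
      rw [hdiff, abs_mul, abs_of_pos (by positivity : (0:ℝ) < (τ:ℝ)⁻¹)]
      calc (τ:ℝ)⁻¹ * |∑ t ∈ Finset.Icc 1 τ, (f i j t ω - (P[f i j t|F (t-1)]) ω)|
          ≤ (τ:ℝ)⁻¹ * ((τ:ℝ)*ε) :=
            mul_le_mul_of_nonneg_left hnotbad.le (by positivity)
        _ = ε := by field_simp
    have hBB : ∀ i j, |M' i j| ≤ B := by
      intro i j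
      rw [hM'def]
      simp only [Matrix.of_apply]
      rw [abs_mul, abs_of_pos (by positivity : (0:ℝ) < (τ:ℝ)⁻¹)]
      calc (τ:ℝ)⁻¹ * |∑ t ∈ Finset.Icc 1 τ, (P[fun ω' => x t ω' i * x t ω' j|F (t-1)]) ω|
          ≤ (τ:ℝ)⁻¹ * ((τ:ℝ) * B) := by
            apply mul_le_mul_of_nonneg_left _ (by positivity)
            calc |∑ t ∈ Finset.Icc 1 τ, (P[fun ω' => x t ω' i * x t ω' j|F (t-1)]) ω|
                ≤ ∑ t ∈ Finset.Icc 1 τ, |(P[fun ω' => x t ω' i * x t ω' j|F (t-1)]) ω| :=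
                  Finset.abs_sum_le_sum_abs _ _
              _ ≤ ∑ _t ∈ Finset.Icc 1 τ, B := Finset.sum_le_sum fun t ht => hωb i j t ht
              _ = (τ:ℝ) * B := by
                  rw [Finset.sum_const, nsmul_eq_mul, hcardIcc]
        _ = B := by field_simp
    have hper := compat_ge_of_perturb hS0 hε.le hB.le hentry hBB hωc
    have heq : φ0^2 - 16 * (s:ℝ) * ε = φ0^2/2 := by
      rw [hεdef]
      field_simp
      ring
    rw [hsdef] at heq
    rw [heq] at hper
    exact hper
  -- measure computation
  have hGc : P {ω | Gprop ω}ᶜ = 0 := by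
    rw [Set.compl_setOf]
    exact ae_iff.1 haeG
  calc ENNReal.ofReal (1 - 2 * (d:ℝ) ^ 2 * e)
      = 1 - ENNReal.ofReal (2 * (d:ℝ)^2 * e) := by
        rw [ENNReal.ofReal_sub _ (by positivity), ENNReal.ofReal_one]
    _ ≤ 1 - P badU := tsub_le_tsub_left hU 1
    _ = P badUᶜ := (prob_compl_eq_one_sub hbadUmeas).symm
    _ = P (badUᶜ ∩ {ω | Gprop ω}) := (measure_inter_conull hGc).symm
    _ ≤ P {ω | compat (Matrix.of fun i j =>
          (τ : ℝ)⁻¹ * ∑ t ∈ Finset.Icc 1 τ, x t ω i * x t ω j) S0 ≥ φ0 ^ 2 / 2} :=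
        measure_mono hincl


end Paper
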